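/- For every integer n ≥ 1, S(n)/√n > 1/√3. -/

import Mathlib

/-!
Write `s N = ∑_{k<N} i_k` (so `S n = s (n + 1)`) and `t N = ∑_{k<N} i_{2k}`. Counting inversions
gives `i_{2k+1} = i_k`, `i_{4k} = i_k` and `i_{4k+2} = -i_{2k}`, hence `s (2N) = s N + t N` and
`t (2N) = s N - t N`. So the excess `E = 3 (s² + t²) - 2N` doubles under `N ↦ 2N`, and under
`N ↦ 2N + 1` it becomes `2E + 4 + 6 (b (s + t) + a (s - t))`, where `a = i_N`, `b = i_{2N}`.
Along the binary expansion of `N` one carries `0 ≤ t ≤ s` together with a lower bound on `E`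
depending on the signs `(a, b)`, namely `0`, `6t - 2`, `6(s - t) - 4`, `6(s + t) - 4`; this system
is closed under both steps. Hence `E ≥ 0`, and `t ≤ s` turns this into `3 S(n)² ≥ n + 1`.
-/

/-- `inv2 n` is the number of inversions in the binary representation of `n`,
i.e. the number of pairs of bit positions `a > b` such that bit `a` of `n` is `1`
and bit `b` of `n` is `0`. -/
def inv2 (n : ℕ) : ℕ :=
  ((Finset.range (n + 1) ×ˢ Finset.range (n + 1)).filter
    (fun p => p.2 < p.1 ∧ n.testBit p.1 = true ∧ n.testBit p.2 = false)).card

/-- `iSeq n = (-1)^(inv2 n)`. -/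
def iSeq (n : ℕ) : ℤ := (-1) ^ inv2 n


/-- The summatory function `S N = ∑_{0 ≤ n ≤ N} iSeq n`. -/
def S (N : ℕ) : ℤ := ∑ n ∈ Finset.range (N + 1), iSeq n

open Finset

def inversions (n : ℕ) : Finset (ℕ × ℕ) :=
  (range (n + 1) ×ˢ range (n + 1)).filter
    (fun p => p.2 < p.1 ∧ n.testBit p.1 = true ∧ n.testBit p.2 = false)

theorem inv2_eq_card_inversions (n : ℕ) : inv2 n = #(inversions n) := rfl

theorem mem_inversions {n : ℕ} {p : ℕ × ℕ} :
    p ∈ inversions n ↔ p.2 < p.1 ∧ n.testBit p.1 = true ∧ n.testBit p.2 = false := by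
  refine ⟨fun h => (mem_filter.1 h).2, fun h => mem_filter.2 ⟨?_, h⟩⟩
  have := Nat.lt_two_pow_self.trans_le (Nat.ge_two_pow_of_testBit h.2.1)
  simp only [mem_product, mem_range]
  omega

theorem card_inversions_filter_snd_ne_zero (n : ℕ) :
    #((inversions n).filter (·.2 ≠ 0)) = #(inversions (n / 2)) := by
  refine card_nbij' (fun p => (p.1 - 1, p.2 - 1)) (fun p => (p.1 + 1, p.2 + 1)) ?_ ?_ ?_ ?_
  · rintro ⟨_ | i, _ | j⟩ h <;> simp_all [mem_inversions, Nat.testBit_add_one]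
  · rintro ⟨i, j⟩ h
    simp_all [mem_inversions, Nat.testBit_add_one]
  · rintro ⟨_ | i, _ | j⟩ h <;> simp_all [mem_inversions]
  · intro p _
    simp

theorem filter_inversions_two_mul_add_one_snd_eq_zero (n : ℕ) :
    (inversions (2 * n + 1)).filter (·.2 = 0) = ∅ := by
  simp only [filter_eq_empty_iff, mem_inversions]
  rintro ⟨i, _⟩ ⟨-, -, h⟩ rfl
  simp at h

theorem card_inversions_two_mul_filter_snd_eq_zero (n : ℕ) :
    #((inversions (2 * n)).filter (·.2 = 0)) = n.bitIndices.length := by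
  have testBit_two_mul_succ (i : ℕ) : (2 * n).testBit (i + 1) = n.testBit i := by
    simpa using Nat.testBit_bit_succ i false n
  rw [← List.toFinset_card_of_nodup Nat.bitIndices_nodup]
  refine card_nbij' (fun p => p.1 - 1) (fun i => (i + 1, 0)) ?_ ?_ ?_ ?_
  · rintro ⟨_ | i, j⟩ h <;> simp_all [mem_inversions]
  · intro i h
    simp_all [mem_inversions]
  · rintro ⟨_ | i, j⟩ h <;> simp_all [mem_inversions]
  · intro p _
    simp

theorem inv2_two_mul_add_one (n : ℕ) : inv2 (2 * n + 1) = inv2 n := by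
  rw [inv2_eq_card_inversions, ← card_filter_add_card_filter_not (p := (·.2 = 0)),
    filter_inversions_two_mul_add_one_snd_eq_zero, card_empty, zero_add,
    card_inversions_filter_snd_ne_zero, inv2_eq_card_inversions]
  congr 2
  omega

theorem inv2_two_mul (n : ℕ) : inv2 (2 * n) = inv2 n + n.bitIndices.length := by
  rw [inv2_eq_card_inversions, ← card_filter_add_card_filter_not (p := (·.2 = 0)),
    card_inversions_two_mul_filter_snd_eq_zero, card_inversions_filter_snd_ne_zero,
    inv2_eq_card_inversions, add_comm]
  congr 3
  omega

theorem iSeq_two_mul_add_one (n : ℕ) : iSeq (2 * n + 1) = iSeq n := by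
  rw [iSeq, inv2_two_mul_add_one, iSeq]

theorem iSeq_four_mul (n : ℕ) : iSeq (4 * n) = iSeq n := by
  rw [iSeq, show 4 * n = 2 * (2 * n) by ring, inv2_two_mul, inv2_two_mul,
    Nat.bitIndices_two_mul, List.length_map, add_assoc, ← two_mul, pow_add, pow_mul]
  simp [iSeq]

theorem iSeq_four_mul_add_two (n : ℕ) : iSeq (4 * n + 2) = -iSeq (2 * n) := by
  rw [iSeq, show 4 * n + 2 = 2 * (2 * n + 1) by ring, inv2_two_mul, inv2_two_mul_add_one,
    Nat.bitIndices_two_mul_add_one, iSeq, inv2_two_mul, List.length_cons, List.length_map,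
    ← add_assoc, pow_succ, mul_neg_one]

theorem Finset.sum_range_two_mul {M : Type*} [AddCommMonoid M] (f : ℕ → M) (n : ℕ) :
    ∑ k ∈ range (2 * n), f k = ∑ k ∈ range n, (f (2 * k) + f (2 * k + 1)) := by
  induction n with
  | zero => simp
  | succ n ih => rw [mul_add_one, sum_range_succ, sum_range_succ, sum_range_succ, ih, add_assoc]

def iSum (N : ℕ) : ℤ := ∑ k ∈ range N, iSeq k

def iEvenSum (N : ℕ) : ℤ := ∑ k ∈ range N, iSeq (2 * k)

theorem S_eq_iSum (n : ℕ) : S n = iSum (n + 1) := rfl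

theorem iSum_two_mul (N : ℕ) : iSum (2 * N) = iSum N + iEvenSum N := by
  simp only [iSum, iEvenSum, sum_range_two_mul, iSeq_two_mul_add_one, sum_add_distrib]
  exact add_comm _ _

theorem iEvenSum_two_mul (N : ℕ) : iEvenSum (2 * N) = iSum N - iEvenSum N := by
  simp only [iSum, iEvenSum, sum_range_two_mul, mul_add, mul_one, ← mul_assoc]
  simp only [show (2 : ℕ) * 2 = 4 by rfl, iSeq_four_mul, iSeq_four_mul_add_two, sum_add_distrib,
    sum_neg_distrib, sub_eq_add_neg]

def excess (N : ℕ) (s t : ℤ) : ℤ := 3 * (s ^ 2 + t ^ 2) - 2 * N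

theorem excess_two_mul (N : ℕ) (s t : ℤ) :
    excess (2 * N) (s + t) (s - t) = 2 * excess N s t := by
  unfold excess
  push_cast
  ring

theorem excess_two_mul_add_one (N : ℕ) {s t a b : ℤ} (ha : a ^ 2 = 1) (hb : b ^ 2 = 1) :
    excess (2 * N + 1) (s + t + b) (s - t + a) =
      2 * excess N s t + 4 + 6 * (b * (s + t) + a * (s - t)) := by
  unfold excess
  push_cast
  linear_combination 3 * ha + 3 * hb

structure SumInvariant (N : ℕ) (s t a b : ℤ) : Prop where
  a_eq_one_or : a = 1 ∨ a = -1
  b_eq_one_or : b = 1 ∨ b = -1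
  t_nonneg : 0 ≤ t
  t_le : t ≤ s
  two_dvd_sub : 2 ∣ s - t
  t_pos : b = -1 → 0 < t
  t_lt : a = -1 → t < s
  excess_one_one : a = 1 → b = 1 → 0 ≤ excess N s t
  excess_one_neg : a = 1 → b = -1 → 6 * t - 2 ≤ excess N s t
  excess_neg_one : a = -1 → b = 1 → 6 * (s - t) - 4 ≤ excess N s t
  excess_neg_neg : a = -1 → b = -1 → 6 * (s + t) - 4 ≤ excess N s t

namespace SumInvariant

variable {N : ℕ} {s t a b : ℤ}

theorem zero : SumInvariant 0 0 0 1 1 := by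
  constructor <;> norm_num [excess]

theorem two_mul (h : SumInvariant N s t a b) : SumInvariant (2 * N) (s + t) (s - t) b a := by
  obtain ⟨ha, hb, _, _, _, _, _, _, _, _, _⟩ := h
  have := excess_two_mul N s t
  rcases ha with rfl | rfl <;> rcases hb with rfl | rfl <;> constructor <;> omega

theorem two_mul_add_one (h : SumInvariant N s t a b) :
    SumInvariant (2 * N + 1) (s + t + b) (s - t + a) a (-b) := by
  obtain ⟨ha, hb, _, _, _, _, _, _, _, _, _⟩ := h
  have sq_eq_one {c : ℤ} (hc : c = 1 ∨ c = -1) : c ^ 2 = 1 := by rcases hc with rfl | rfl <;> rfl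
  have := excess_two_mul_add_one N (s := s) (t := t) (sq_eq_one ha) (sq_eq_one hb)
  rcases ha with rfl | rfl <;> rcases hb with rfl | rfl <;> constructor <;> omega

theorem excess_nonneg (h : SumInvariant N s t a b) : 0 ≤ excess N s t := by
  rcases h.a_eq_one_or with rfl | rfl <;> rcases h.b_eq_one_or with rfl | rfl
  · exact h.excess_one_one rfl rfl
  · linarith [h.excess_one_neg rfl rfl, h.t_pos rfl]
  · linarith [h.excess_neg_one rfl rfl, h.t_lt rfl]
  · linarith [h.excess_neg_neg rfl rfl, h.t_pos rfl, h.t_le]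

theorem le_three_mul_sq (h : SumInvariant N s t a b) : (N : ℤ) ≤ 3 * s ^ 2 := by
  have := h.excess_nonneg
  have : t ^ 2 ≤ s ^ 2 := pow_le_pow_left₀ h.t_nonneg h.t_le 2
  unfold excess at *
  linarith

end SumInvariant

theorem sumInvariant_iSum (N : ℕ) :
    SumInvariant N (iSum N) (iEvenSum N) (iSeq N) (iSeq (2 * N)) := by
  induction N using Nat.evenOddRec with
  | h0 => simpa [iSum, iEvenSum, show iSeq 0 = 1 by decide] using SumInvariant.zero
  | h_even N ih =>
    rw [iSum_two_mul, iEvenSum_two_mul, show 2 * (2 * N) = 4 * N by ring, iSeq_four_mul]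
    exact ih.two_mul
  | h_odd N ih =>
    rw [iSum, sum_range_succ, ← iSum, iEvenSum, sum_range_succ, ← iEvenSum, iSum_two_mul,
      iEvenSum_two_mul, iSeq_two_mul_add_one, show 2 * (2 * N + 1) = 4 * N + 2 by ring,
      show 2 * (2 * N) = 4 * N by ring, iSeq_four_mul, iSeq_four_mul_add_two]
    exact ih.two_mul_add_one

theorem S_nonneg (n : ℕ) : 0 ≤ S n :=
  (sumInvariant_iSum (n + 1)).t_nonneg.trans (sumInvariant_iSum (n + 1)).t_le

theorem lt_three_mul_sq_S (n : ℕ) : (n : ℤ) < 3 * S n ^ 2 := by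
  have := (sumInvariant_iSum (n + 1)).le_three_mul_sq
  rw [S_eq_iSum]
  push_cast at this
  linarith

theorem summatory_strict_lower_bound (n : ℕ) (hn : 1 ≤ n) :
    (S n : ℝ) / Real.sqrt n > 1 / Real.sqrt 3 := by
  have hS : (n : ℝ) < 3 * (S n : ℝ) ^ 2 := by exact_mod_cast lt_three_mul_sq_S n
  have hS0 : (0 : ℝ) ≤ S n := by exact_mod_cast S_nonneg n
  have hn0 : (0 : ℝ) < n := by exact_mod_cast hn
  rw [gt_iff_lt, div_lt_div_iff₀ (by positivity) (Real.sqrt_pos.2 hn0), one_mul,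
    Real.sqrt_lt hn0.le (by positivity), mul_pow, Real.sq_sqrt (by norm_num)]
  linarith
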